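/- If T is an A-bounded operator on H satisfying AT² = 0, then ω_A(T) = (1/2)‖T‖_A. Consequently, for an A-bounded Q, the matrix [[0,Q],[0,0]] on H⊕H satisfies ω_𝔸([[0,Q],[0,0]]) = (1/2)‖Q‖_A. -/

import Mathlib

open ContinuousLinearMap

/-- The `A`-seminorm of a vector: `‖x‖_A = √⟨Ax, x⟩`. -/
noncomputable def vnormA {H : Type*} [NormedAddCommGroup H] [InnerProductSpace ℂ H]
    (A : H →L[ℂ] H) (x : H) : ℝ :=
  Real.sqrt (RCLike.re (inner ℂ (A x) x : ℂ))

/-- `T` is `A`-bounded, i.e. `T ∈ B_{A^{1/2}}(H)`. -/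
def ABounded {H : Type*} [NormedAddCommGroup H] [InnerProductSpace ℂ H]
    (A T : H →L[ℂ] H) : Prop :=
  ∃ c : ℝ, 0 < c ∧ ∀ x, vnormA A (T x) ≤ c * vnormA A x

/-- The `A`-operator seminorm `‖T‖_A = sup{‖Tx‖_A : ‖x‖_A = 1}`. -/
noncomputable def opNormA {H : Type*} [NormedAddCommGroup H] [InnerProductSpace ℂ H]
    (A T : H →L[ℂ] H) : ℝ :=
  sSup {c : ℝ | ∃ x : H, vnormA A x = 1 ∧ c = vnormA A (T x)}

/-- The `A`-numerical radius `ω_A(T) = sup{|⟨ATx, x⟩| : ‖x‖_A = 1}`. -/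
noncomputable def wA {H : Type*} [NormedAddCommGroup H] [InnerProductSpace ℂ H]
    (A T : H →L[ℂ] H) : ℝ :=
  sSup {c : ℝ | ∃ x : H, vnormA A x = 1 ∧ c = ‖(inner ℂ (A (T x)) x : ℂ)‖}

/-- `Ts` is the reduced (Douglas) solution of `AX = T*A`, i.e. `Ts = T^{♯_A}`. -/
def IsReducedAdjoint {H : Type*} [NormedAddCommGroup H] [InnerProductSpace ℂ H]
    [CompleteSpace H] (A T Ts : H →L[ℂ] H) : Prop :=
  A ∘L Ts = (ContinuousLinearMap.adjoint T) ∘L A ∧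
    ∀ y, Ts y ∈ closure (Set.range A)

/-- The `2 × 2` operator matrix `[[P, Q], [R, S]]` acting on `H ⊕ H` (with the `ℓ²` product
inner product). -/
noncomputable def blk {H : Type*} [NormedAddCommGroup H] [InnerProductSpace ℂ H]
    (P Q R S : H →L[ℂ] H) : WithLp 2 (H × H) →L[ℂ] WithLp 2 (H × H) :=
  letI e := (WithLp.prodContinuousLinearEquiv 2 ℂ H H)
  (e.symm.toContinuousLinearMap) ∘L
    ((P.comp (fst ℂ H H) + Q.comp (snd ℂ H H)).prod
      (R.comp (fst ℂ H H) + S.comp (snd ℂ H H))) ∘L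
    (e.toContinuousLinearMap)

/-- `𝔸 = diag(A, A)` on `H ⊕ H`. -/
noncomputable def AA {H : Type*} [NormedAddCommGroup H] [InnerProductSpace ℂ H]
    (A : H →L[ℂ] H) : WithLp 2 (H × H) →L[ℂ] WithLp 2 (H × H) :=
  blk A 0 0 A

/-!
Factor `A = A^{1/2} A^{1/2}`, so that `‖x‖_A = ‖A^{1/2} x‖` and `⟨A x, y⟩ = ⟨A^{1/2} x, A^{1/2} y⟩`.
Since `A^{1/2} T² = 0`, `‖T (x + c T x)‖_A = ‖T x‖_A` for every scalar `c`; taking for `x + c T x`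
the component of `x` orthogonal to `T x` in this geometry yields `2 |⟨A T x, x⟩| ≤ ‖T‖_A ‖x‖_A²`.
Conversely, polarization with `y = T x / ‖T x‖_A`, for which `A T y = 0`, gives
`‖T x‖_A ≤ 2 ω_A(T)` on the `A`-unit sphere. The operator `[[0, Q], [0, 0]]` squares to zero and
has `𝔸`-seminorm `‖Q‖_A`, so the second claim is an instance of the first.
-/

open scoped InnerProductSpace ComplexOrder

section SemiInnerProduct

variable {H : Type*} [NormedAddCommGroup H] [InnerProductSpace ℂ H]

theorem vnormA_nonneg (A : H →L[ℂ] H) (x : H) : 0 ≤ vnormA A x := Real.sqrt_nonneg _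

@[simp]
theorem vnormA_zero (A : H →L[ℂ] H) : vnormA A 0 = 0 := by
  simp [vnormA]

theorem sq_vnormA {A : H →L[ℂ] H} (hA : A.IsPositive) (x : H) :
    vnormA A x ^ 2 = RCLike.re ⟪A x, x⟫_ℂ :=
  Real.sq_sqrt (hA.re_inner_nonneg_left x)

theorem opNormA_nonneg (A T : H →L[ℂ] H) : 0 ≤ opNormA A T :=
  Real.sSup_nonneg (by rintro _ ⟨x, -, rfl⟩; exact vnormA_nonneg A (T x))

theorem wA_nonneg (A T : H →L[ℂ] H) : 0 ≤ wA A T :=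
  Real.sSup_nonneg (by rintro _ ⟨x, -, rfl⟩; positivity)

theorem opNormA_le_of_forall {A T : H →L[ℂ] H} {c : ℝ} (hc : 0 ≤ c)
    (h : ∀ x, vnormA A x = 1 → vnormA A (T x) ≤ c) : opNormA A T ≤ c :=
  Real.sSup_le (by rintro _ ⟨x, hx, rfl⟩; exact h x hx) hc

variable [CompleteSpace H] {A : H →L[ℂ] H}

theorem inner_apply_eq_inner_sqrt (hA : A.IsPositive) (x y : H) :
    ⟪A x, y⟫_ℂ = ⟪CFC.sqrt A x, CFC.sqrt A y⟫_ℂ := by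
  conv_lhs => rw [← CFC.sqrt_mul_sqrt_self A ((nonneg_iff_isPositive A).2 hA)]
  rw [← adjoint_inner_left, ← star_eq_adjoint, (CFC.sqrt_nonneg A).isSelfAdjoint.star_eq]
  rfl

theorem vnormA_eq_norm_sqrt (hA : A.IsPositive) (x : H) : vnormA A x = ‖CFC.sqrt A x‖ := by
  rw [vnormA, inner_apply_eq_inner_sqrt hA, inner_self_eq_norm_sq, Real.sqrt_sq (norm_nonneg _)]

theorem vnormA_smul (hA : A.IsPositive) (c : ℂ) (x : H) :
    vnormA A (c • x) = ‖c‖ * vnormA A x := by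
  simp only [vnormA_eq_norm_sqrt hA, map_smul, norm_smul]

theorem norm_inner_le_vnormA_mul (hA : A.IsPositive) (x y : H) :
    ‖⟪A x, y⟫_ℂ‖ ≤ vnormA A x * vnormA A y := by
  rw [inner_apply_eq_inner_sqrt hA, vnormA_eq_norm_sqrt hA, vnormA_eq_norm_sqrt hA]
  exact norm_inner_le_norm _ _

theorem le_sSup_mul_vnormA_pow (hA : A.IsPositive) {f : H → ℝ} {k : ℕ} (hk : k ≠ 0)
    (hf : ∀ (c : ℂ) x, f (c • x) = ‖c‖ ^ k * f x)
    (hbdd : BddAbove {c | ∃ x, vnormA A x = 1 ∧ c = f x})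
    (hnull : ∀ x, vnormA A x = 0 → f x ≤ 0) (x : H) :
    f x ≤ sSup {c | ∃ x, vnormA A x = 1 ∧ c = f x} * vnormA A x ^ k := by
  rcases (vnormA_nonneg A x).eq_or_lt with h0 | hpos
  · rw [← h0, zero_pow hk, mul_zero]
    exact hnull x h0.symm
  set r := vnormA A x
  have hunit : vnormA A ((r : ℂ)⁻¹ • x) = 1 := by
    rw [vnormA_smul hA, norm_inv, Complex.norm_of_nonneg hpos.le, inv_mul_cancel₀ hpos.ne']
  have hle := le_csSup hbdd ⟨_, hunit, rfl⟩
  rw [hf, norm_inv, Complex.norm_of_nonneg hpos.le, inv_pow, inv_mul_le_iff₀ (by positivity)]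
    at hle
  linarith

theorem vnormA_apply_le_opNormA_mul (hA : A.IsPositive) {T : H →L[ℂ] H} (hT : ABounded A T)
    (x : H) : vnormA A (T x) ≤ opNormA A T * vnormA A x := by
  obtain ⟨c, -, hc⟩ := hT
  simpa [opNormA] using le_sSup_mul_vnormA_pow hA (f := fun x => vnormA A (T x)) one_ne_zero
    (fun c x => by simp [vnormA_smul hA])
    ⟨c, by rintro _ ⟨y, hy, rfl⟩; simpa [hy] using hc y⟩
    (fun y hy => by simpa [hy] using hc y) x

theorem norm_inner_le_wA_mul (hA : A.IsPositive) {T : H →L[ℂ] H} (hT : ABounded A T) (x : H) :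
    ‖⟪A (T x), x⟫_ℂ‖ ≤ wA A T * vnormA A x ^ 2 := by
  obtain ⟨c, -, hc⟩ := hT
  have hcs (y : H) := (norm_inner_le_vnormA_mul hA (T y) y).trans
    (mul_le_mul_of_nonneg_right (hc y) (vnormA_nonneg A y))
  exact le_sSup_mul_vnormA_pow hA (f := fun x => ‖⟪A (T x), x⟫_ℂ‖) two_ne_zero
    (fun c x => by
      simp only [map_smul, inner_smul_left, inner_smul_right, norm_mul, RCLike.norm_conj]; ring)
    ⟨c, by rintro _ ⟨y, hy, rfl⟩; simpa [hy] using hcs y⟩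
    (fun y hy => by simpa [hy] using hcs y) x

end SemiInnerProduct

theorem two_mul_norm_inner_le_of_forall_norm_le {K : Type*} [NormedAddCommGroup K]
    [InnerProductSpace ℂ K] {u v : K} {N : ℝ} (h : ∀ c : ℂ, ‖v‖ ≤ N * ‖u + c • v‖) :
    2 * ‖⟪v, u⟫_ℂ‖ ≤ N * ‖u‖ ^ 2 := by
  have h0 : ‖v‖ ≤ N * ‖u‖ := by simpa using h 0
  rcases (norm_nonneg v).eq_or_lt with hv | hv
  · rw [← hv] at h0
    rw [norm_eq_zero.1 hv.symm, inner_zero_left, norm_zero]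
    nlinarith [norm_nonneg u]
  set m := ‖⟪v, u⟫_ℂ‖
  set c : ℂ := -(⟪v, u⟫_ℂ / (‖v‖ ^ 2 : ℝ))
  -- `u + c • v` is the component of `u` orthogonal to `v`
  have hproj : ‖v‖ ^ 2 * ‖u + c • v‖ ^ 2 = ‖v‖ ^ 2 * ‖u‖ ^ 2 - m ^ 2 := by
    rw [norm_add_sq (𝕜 := ℂ), inner_smul_right, norm_smul, norm_neg, norm_div,
      Complex.norm_of_nonneg (by positivity), ← inner_conj_symm u v, neg_mul, div_mul_eq_mul_div,
      Complex.mul_conj', ← Complex.ofReal_pow, ← Complex.ofReal_div, RCLike.re_to_complex,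
      Complex.neg_re, Complex.ofReal_re]
    field_simp
    ring
  have h1 : ‖v‖ ^ 4 ≤ N ^ 2 * (‖v‖ ^ 2 * ‖u‖ ^ 2 - m ^ 2) := by
    rw [← hproj]
    nlinarith [pow_le_pow_left₀ hv.le (h c) 2, sq_nonneg ‖v‖]
  have hN : 0 < N := pos_of_mul_pos_left (hv.trans_le h0) (norm_nonneg u)
  have hdisc : N ^ 2 * (4 * m ^ 2) ≤ N ^ 2 * (N ^ 2 * ‖u‖ ^ 4) := by
    nlinarith [sq_nonneg (N ^ 2 * ‖u‖ ^ 2 - 2 * ‖v‖ ^ 2)]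
  have hm := le_of_mul_le_mul_left hdisc (by positivity)
  nlinarith [norm_nonneg ⟪v, u⟫_ℂ, mul_nonneg hN.le (sq_nonneg ‖u‖)]

section SquareZero

variable {H : Type*} [NormedAddCommGroup H] [InnerProductSpace ℂ H] [CompleteSpace H]
  {A T : H →L[ℂ] H}

theorem sqrt_apply_apply_apply_eq_zero (hA : A.IsPositive) (hT2 : A ∘L (T ∘L T) = 0) (x : H) :
    CFC.sqrt A (T (T x)) = 0 := by
  have hx : A (T (T x)) = 0 := DFunLike.congr_fun hT2 x
  rw [← norm_eq_zero, ← vnormA_eq_norm_sqrt hA, vnormA, hx, inner_zero_left, map_zero,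
    Real.sqrt_zero]

theorem two_mul_norm_inner_le_opNormA_mul (hA : A.IsPositive) (hT : ABounded A T)
    (hT2 : A ∘L (T ∘L T) = 0) (x : H) :
    2 * ‖⟪A (T x), x⟫_ℂ‖ ≤ opNormA A T * vnormA A x ^ 2 := by
  rw [inner_apply_eq_inner_sqrt hA, vnormA_eq_norm_sqrt hA]
  refine two_mul_norm_inner_le_of_forall_norm_le fun c => ?_
  simpa [vnormA_eq_norm_sqrt hA, sqrt_apply_apply_apply_eq_zero hA hT2] using
    vnormA_apply_le_opNormA_mul hA hT (x + c • T x)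

theorem re_inner_add_inner_le_wA_mul (hA : A.IsPositive) (hT : ABounded A T) (x y : H) :
    RCLike.re (⟪A (T x), y⟫_ℂ + ⟪A (T y), x⟫_ℂ) ≤
      wA A T * (vnormA A x ^ 2 + vnormA A y ^ 2) := by
  have hpolar : 2 * (⟪A (T x), y⟫_ℂ + ⟪A (T y), x⟫_ℂ) =
      ⟪A (T (x + y)), x + y⟫_ℂ - ⟪A (T (x - y)), x - y⟫_ℂ := by
    simp only [map_add, map_sub, inner_add_left, inner_add_right, inner_sub_left,
      inner_sub_right]
    ring
  have hpar : vnormA A (x + y) ^ 2 + vnormA A (x - y) ^ 2 =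
      2 * (vnormA A x ^ 2 + vnormA A y ^ 2) := by
    simp only [vnormA_eq_norm_sqrt hA, map_add, map_sub]
    exact parallelogram_law_with_norm ℂ (CFC.sqrt A x) (CFC.sqrt A y)
  have hre := congrArg RCLike.re hpolar
  rw [RCLike.ofNat_mul_re, map_sub] at hre
  have hplus := (RCLike.re_le_norm _).trans (norm_inner_le_wA_mul hA hT (x + y))
  have hminus := ((neg_le_abs _).trans (RCLike.abs_re_le_norm _)).trans
    (norm_inner_le_wA_mul hA hT (x - y))
  linarith [congrArg (wA A T * ·) hpar]

theorem vnormA_apply_le_two_mul_wA (hA : A.IsPositive) (hT : ABounded A T)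
    (hT2 : A ∘L (T ∘L T) = 0) {x : H} (hx : vnormA A x = 1) :
    vnormA A (T x) ≤ 2 * wA A T := by
  rcases (vnormA_nonneg A (T x)).eq_or_lt with h0 | hpos
  · rw [← h0]
    linarith [wA_nonneg A T]
  have hTx : ⟪A (T x), T x⟫_ℂ = (vnormA A (T x) : ℂ) ^ 2 := by
    rw [inner_apply_eq_inner_sqrt hA, inner_self_eq_norm_sq_to_K, vnormA_eq_norm_sqrt hA]
    rfl
  have hTT : A (T (T x)) = 0 := DFunLike.congr_fun hT2 x
  set r := vnormA A (T x)
  have h := re_inner_add_inner_le_wA_mul hA hT x ((r : ℂ)⁻¹ • T x)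
  rw [vnormA_smul hA, norm_inv, Complex.norm_of_nonneg hpos.le, inv_mul_cancel₀ hpos.ne', hx,
    map_smul, map_smul, hTT, smul_zero, inner_zero_left, add_zero, inner_smul_right, hTx] at h
  simp only [RCLike.re_to_complex] at h
  rw [sq, ← mul_assoc, inv_mul_cancel₀ (by exact_mod_cast hpos.ne'), one_mul,
    Complex.ofReal_re] at h
  linarith

theorem wA_eq_half_opNormA (hA : A.IsPositive) (hT : ABounded A T) (hT2 : A ∘L (T ∘L T) = 0) :
    wA A T = 1 / 2 * opNormA A T := by
  refine le_antisymm (Real.sSup_le ?_ (by linarith [opNormA_nonneg A T])) ?_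
  · rintro _ ⟨x, hx, rfl⟩
    have := two_mul_norm_inner_le_opNormA_mul hA hT hT2 x
    rw [hx] at this
    linarith
  · linarith [opNormA_le_of_forall (by linarith [wA_nonneg A T]) fun x hx =>
      vnormA_apply_le_two_mul_wA hA hT hT2 hx]

end SquareZero

section Block

variable {H : Type*} [NormedAddCommGroup H] [InnerProductSpace ℂ H]

@[simp]
theorem blk_apply_fst (P Q R S : H →L[ℂ] H) (v : WithLp 2 (H × H)) :
    (blk P Q R S v).fst = P v.fst + Q v.snd := rfl

@[simp]
theorem blk_apply_snd (P Q R S : H →L[ℂ] H) (v : WithLp 2 (H × H)) :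
    (blk P Q R S v).snd = R v.fst + S v.snd := rfl

@[simp]
theorem AA_apply_fst (A : H →L[ℂ] H) (v : WithLp 2 (H × H)) : (AA A v).fst = A v.fst := by
  simp [AA]

@[simp]
theorem AA_apply_snd (A : H →L[ℂ] H) (v : WithLp 2 (H × H)) : (AA A v).snd = A v.snd := by
  simp [AA]

theorem inner_AA_apply (A : H →L[ℂ] H) (v w : WithLp 2 (H × H)) :
    ⟪AA A v, w⟫_ℂ = ⟪A v.fst, w.fst⟫_ℂ + ⟪A v.snd, w.snd⟫_ℂ := by
  simp [WithLp.prod_inner_apply]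

theorem blk_strictUpper_comp_self (Q : H →L[ℂ] H) : blk 0 Q 0 0 ∘L blk 0 Q 0 0 = 0 := by
  ext v
  refine WithLp.ofLp_injective 2 (Prod.ext ?_ ?_) <;> simp

variable {A : H →L[ℂ] H}

theorem isPositive_AA (hA : A.IsPositive) : (AA A).IsPositive := by
  refine (isPositive_iff _).2 ⟨fun v w => ?_, fun v => ?_⟩
  · simp [WithLp.prod_inner_apply, hA.inner_left_eq_inner_right]
  · rw [inner_AA_apply]
    exact add_nonneg (hA.inner_nonneg_left _) (hA.inner_nonneg_left _)

theorem sq_vnormA_AA (hA : A.IsPositive) (v : WithLp 2 (H × H)) :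
    vnormA (AA A) v ^ 2 = vnormA A v.fst ^ 2 + vnormA A v.snd ^ 2 := by
  rw [sq_vnormA (isPositive_AA hA), inner_AA_apply, map_add, sq_vnormA hA, sq_vnormA hA]

theorem vnormA_snd_le (hA : A.IsPositive) (v : WithLp 2 (H × H)) :
    vnormA A v.snd ≤ vnormA (AA A) v := by
  refine (pow_le_pow_iff_left₀ (vnormA_nonneg _ _) (vnormA_nonneg _ _) two_ne_zero).1 ?_
  rw [sq_vnormA_AA hA]
  nlinarith [sq_nonneg (vnormA A v.fst)]

theorem vnormA_AA_blk_apply (hA : A.IsPositive) (Q : H →L[ℂ] H) (v : WithLp 2 (H × H)) :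
    vnormA (AA A) (blk 0 Q 0 0 v) = vnormA A (Q v.snd) := by
  refine (sq_eq_sq₀ (vnormA_nonneg _ _) (vnormA_nonneg _ _)).1 ?_
  simp [sq_vnormA_AA hA]

theorem ABounded.blk (hA : A.IsPositive) {Q : H →L[ℂ] H} (hQ : ABounded A Q) :
    ABounded (AA A) (blk 0 Q 0 0) := by
  obtain ⟨c, hc, hQc⟩ := hQ
  refine ⟨c, hc, fun v => ?_⟩
  rw [vnormA_AA_blk_apply hA]
  exact (hQc _).trans (mul_le_mul_of_nonneg_left (vnormA_snd_le hA v) hc.le)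

variable [CompleteSpace H]

theorem opNormA_AA_blk (hA : A.IsPositive) {Q : H →L[ℂ] H} (hQ : ABounded A Q) :
    opNormA (AA A) (blk 0 Q 0 0) = opNormA A Q := by
  apply le_antisymm
  · refine opNormA_le_of_forall (opNormA_nonneg A Q) fun v hv => ?_
    rw [vnormA_AA_blk_apply hA]
    calc vnormA A (Q v.snd) ≤ opNormA A Q * vnormA A v.snd :=
          vnormA_apply_le_opNormA_mul hA hQ _
      _ ≤ opNormA A Q * 1 :=
          mul_le_mul_of_nonneg_left (hv ▸ vnormA_snd_le hA v) (opNormA_nonneg A Q)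
      _ = opNormA A Q := mul_one _
  · refine opNormA_le_of_forall (opNormA_nonneg _ _) fun y hy => ?_
    let v : WithLp 2 (H × H) := WithLp.toLp 2 (0, y)
    have hv : vnormA (AA A) v = 1 := by
      refine (sq_eq_sq₀ (vnormA_nonneg _ _) zero_le_one).1 ?_
      simp [v, sq_vnormA_AA hA, hy]
    simpa [vnormA_AA_blk_apply hA, hv, v] using
      vnormA_apply_le_opNormA_mul (isPositive_AA hA) (hQ.blk hA) v

end Block

theorem stmt6 {H : Type*} [NormedAddCommGroup H] [InnerProductSpace ℂ H] [CompleteSpace H]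
    (A : H →L[ℂ] H) (hA : A.IsPositive)
    (T Q : H →L[ℂ] H) (hT : ABounded A T) (hT2 : A ∘L (T ∘L T) = 0)
    (hQ : ABounded A Q) :
    wA A T = (1 / 2) * opNormA A T ∧
      wA (AA A) (blk 0 Q 0 0) = (1 / 2) * opNormA A Q := by
  refine ⟨wA_eq_half_opNormA hA hT hT2, ?_⟩
  have hQ2 : AA A ∘L (blk 0 Q 0 0 ∘L blk 0 Q 0 0) = 0 := by
    rw [blk_strictUpper_comp_self, comp_zero]
  rw [wA_eq_half_opNormA (isPositive_AA hA) (hQ.blk hA) hQ2, opNormA_AA_blk hA hQ]
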